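/- arXiv:2605.22308 — 4 statements merged into one kernel-verified Lean document; each statement's English description precedes it below -/
import Mathlib

section
/- For integers p ≥ 2 and m ≥ 0, the sum over odd a with 0 < a < 2p of (4 sin²(aπ/(2p)))^m equals p times the sum over integers l with |l| ≤ ⌊m/p⌋ of (-1)^((p+1)l) · C(2m, m+pl). -/
open Finset Real

private lemma geom_lemma (p : ℕ) (hp : 0 < p) (k : ℤ) :
    ∑ t ∈ Finset.range p, Complex.exp ((((2*t+1 : ℕ) * k * Real.pi / p : ℝ)) * Complex.I)
    = if (p:ℤ) ∣ k then (p : ℂ) * (-1)^(k / p) else 0 := by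
  have hp' : (p:ℝ) ≠ 0 := Nat.cast_ne_zero.mpr hp.ne'
  have hpc : (p:ℂ) ≠ 0 := Nat.cast_ne_zero.mpr hp.ne'
  have hterm : ∀ t ∈ Finset.range p,
      Complex.exp ((((2*t+1 : ℕ) * k * Real.pi / p : ℝ)) * Complex.I)
      = Complex.exp (((k * Real.pi / p : ℝ)) * Complex.I) *
        (Complex.exp (((2 * k * Real.pi / p : ℝ)) * Complex.I)) ^ t := by
    intro t _
    rw [← Complex.exp_nat_mul, ← Complex.exp_add]
    congr 1
    push_cast
    field_simp
    ring
  rw [Finset.sum_congr rfl hterm, ← Finset.mul_sum]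
  by_cases hd : (p:ℤ) ∣ k
  · obtain ⟨l, rfl⟩ := hd
    have h1 : Complex.exp (((2 * ((p * l : ℤ) : ℝ) * Real.pi / p : ℝ)) * Complex.I) = 1 := by
      have : (((2 * ((p * l : ℤ) : ℝ) * Real.pi / p : ℝ)) * Complex.I) = (l : ℤ) * (2 * Real.pi * Complex.I) := by
        push_cast
        field_simp [hpc]
      rw [this, Complex.exp_int_mul_two_pi_mul_I]
    have h2 : Complex.exp (((((p * l : ℤ) : ℝ)) * Real.pi / p : ℝ) * Complex.I) = (-1)^l := by
      have : (((((p * l : ℤ) : ℝ)) * Real.pi / p : ℝ) * Complex.I) = (l : ℤ) * (Real.pi * Complex.I) := by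
        push_cast
        field_simp [hpc]
      rw [this, Complex.exp_int_mul, Complex.exp_pi_mul_I]
    rw [h1, h2]
    simp [Int.mul_ediv_cancel_left _ (by exact_mod_cast hp.ne' : (p:ℤ) ≠ 0)]
    ring
  · rw [if_neg hd]
    have hz : Complex.exp (((2 * k * Real.pi / p : ℝ)) * Complex.I) ≠ 1 := by
      intro h
      obtain ⟨n, hn⟩ := Complex.exp_eq_one_iff.mp h
      apply hd
      have him := congrArg Complex.im hn
      simp [Complex.ofReal_mul] at him
      have hr : (k : ℝ) = n * p := by
        field_simp at him
        nlinarith [Real.pi_pos, him]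
      have hi : k = n * p := by exact_mod_cast hr
      exact ⟨n, by rw [hi]; ring⟩
    rw [geom_sum_eq hz]
    have hpow : (Complex.exp (((2 * k * Real.pi / p : ℝ)) * Complex.I)) ^ p = 1 := by
      rw [← Complex.exp_nat_mul]
      have : (p:ℂ) * (((2 * k * Real.pi / p : ℝ)) * Complex.I) = (k : ℤ) * (2 * Real.pi * Complex.I) := by
        push_cast
        field_simp [hpc]
      rw [this, Complex.exp_int_mul_two_pi_mul_I]
    rw [hpow]
    simp

private lemma term_lemma (p m t : ℕ) (hp : 0 < p) :
    ((4 * Real.sin ((2*t+1 : ℕ) * Real.pi / (2*p)) ^ 2 : ℝ) : ℂ) ^ m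
    = ∑ j ∈ Finset.range (2*m+1), (-1:ℂ)^(m+j) * ((2*m).choose j) *
        Complex.exp ((((2*t+1 : ℕ) * (((j:ℤ) - (m:ℤ) : ℤ) : ℝ) * Real.pi / p : ℝ)) * Complex.I) := by
  have hp' : (p:ℝ) ≠ 0 := Nat.cast_ne_zero.mpr hp.ne'
  have hpc : (p:ℂ) ≠ 0 := Nat.cast_ne_zero.mpr hp.ne'
  set θ : ℝ := ((2*t+1 : ℕ) : ℝ) * Real.pi / (2*p) with hθ
  have e1 : Complex.exp (↑θ*Complex.I) - Complex.exp (-↑θ*Complex.I)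
      = 2*Complex.I*Complex.sin θ := by
    rw [Complex.sin]
    linear_combination (Complex.exp (↑θ*Complex.I) - Complex.exp (-↑θ*Complex.I)) * Complex.I_mul_I
  have step1 : ((4 * Real.sin θ ^ 2 : ℝ) : ℂ) ^ m
      = (-1:ℂ)^m * (Complex.exp (↑θ*Complex.I) - Complex.exp (-↑θ*Complex.I))^(2*m) := by
    rw [e1]
    have h4 : ((4 * Real.sin θ ^ 2 : ℝ) : ℂ) = 4 * Complex.sin θ ^ 2 := by push_cast; ring
    rw [h4, pow_mul,
        show (2*Complex.I*Complex.sin ↑θ)^2 = 4 * (Complex.I*Complex.I) * Complex.sin ↑θ^2 by ring,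
        Complex.I_mul_I, ← mul_pow]
    ring_nf
  rw [step1, sub_pow, Finset.mul_sum]
  apply Finset.sum_congr rfl
  intro j hj
  have hj' : j ≤ 2*m := Nat.lt_succ_iff.mp (Finset.mem_range.mp hj)
  have hexp : Complex.exp (↑θ*Complex.I)^j * Complex.exp (-↑θ*Complex.I)^(2*m-j)
      = Complex.exp ((((2*t+1 : ℕ) * (((j:ℤ) - (m:ℤ) : ℤ) : ℝ) * Real.pi / p : ℝ)) * Complex.I) := by
    rw [← Complex.exp_nat_mul, ← Complex.exp_nat_mul, ← Complex.exp_add]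
    congr 1
    have hcast : ((2*m - j : ℕ) : ℂ) = 2*(m:ℂ) - j := by
      have h : ((2*m - j : ℕ) : ℤ) = 2*(m:ℤ) - j := by omega
      exact_mod_cast congrArg (Int.cast : ℤ → ℂ) h
    rw [hcast, hθ]
    push_cast
    field_simp
    ring
  have h2m : (-1:ℂ)^(2*m) = 1 := by rw [pow_mul]; norm_num
  rw [← hexp, pow_add (-1:ℂ) m j, pow_add (-1:ℂ) j (2*m), h2m]
  ring

theorem stmt0 (p m : ℕ) (hp : 2 ≤ p) :
    ∑ a ∈ (Finset.Ioo 0 (2 * p)).filter (fun a => Odd a),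
      (4 * Real.sin (a * Real.pi / (2 * p)) ^ 2) ^ m
    = p * ∑ l ∈ Finset.Icc (-(m / p : ℤ)) (m / p),
        (-1 : ℝ) ^ (((p : ℤ) + 1) * l) * ((2 * m).choose ((m : ℤ) + p * l).toNat) := by
  have hp0 : 0 < p := by omega
  have hpz : (0:ℤ) < p := by exact_mod_cast hp0
  have hpne : (p:ℤ) ≠ 0 := hpz.ne'
  have hne1 : (-1:ℂ) ≠ 0 := by norm_num
  have hset : (Finset.Ioo 0 (2 * p)).filter (fun a => Odd a)
      = (Finset.range p).image (fun t => 2*t+1) := by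
    ext a
    simp only [Finset.mem_filter, Finset.mem_Ioo, Finset.mem_image, Finset.mem_range,
      Nat.odd_iff]
    constructor
    · rintro ⟨⟨h1, h2⟩, h3⟩
      exact ⟨a / 2, by omega, by omega⟩
    · rintro ⟨t, ht, rfl⟩
      omega
  rw [hset, Finset.sum_image (by intro x _ y _ h; simp only at h; omega)]
  apply Complex.ofReal_injective
  rw [Complex.ofReal_sum]
  simp only [Complex.ofReal_pow]
  calc ∑ t ∈ Finset.range p, ((4 * Real.sin ((2*t+1 : ℕ) * Real.pi / (2*p)) ^ 2 : ℝ) : ℂ) ^ m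
      = ∑ t ∈ Finset.range p, ∑ j ∈ Finset.range (2*m+1), (-1:ℂ)^(m+j) * ((2*m).choose j) *
          Complex.exp ((((2*t+1 : ℕ) * (((j:ℤ) - (m:ℤ) : ℤ) : ℝ) * Real.pi / p : ℝ)) * Complex.I) := by
        exact Finset.sum_congr rfl fun t _ => term_lemma p m t hp0
    _ = ∑ j ∈ Finset.range (2*m+1), (-1:ℂ)^(m+j) * ((2*m).choose j) *
          (if (p:ℤ) ∣ ((j:ℤ) - m) then (p : ℂ) * (-1)^(((j:ℤ) - m) / p) else 0) := by
        rw [Finset.sum_comm]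
        exact Finset.sum_congr rfl fun j _ => by
          rw [← Finset.mul_sum, geom_lemma p hp0 ((j:ℤ) - m)]
    _ = ∑ j ∈ (Finset.range (2*m+1)).filter (fun j : ℕ => (p:ℤ) ∣ ((j:ℤ) - m)),
          (-1:ℂ)^(m+j) * ((2*m).choose j) * ((p : ℂ) * (-1)^(((j:ℤ) - m) / p)) := by
        rw [Finset.sum_filter]
        exact Finset.sum_congr rfl fun j _ => by
          by_cases h : (p:ℤ) ∣ ((j:ℤ) - m) <;> simp [h]
    _ = ∑ l ∈ Finset.Icc (-(m / p : ℤ)) (m / p),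
          (p:ℂ) * ((-1:ℂ) ^ (((p : ℤ) + 1) * l) * ((2 * m).choose ((m : ℤ) + p * l).toNat)) := by
        refine Finset.sum_nbij' (fun j => ((j:ℤ) - m) / p) (fun l => ((m : ℤ) + p * l).toNat)
          ?_ ?_ ?_ ?_ ?_
        · intro j hjf
          simp only [Finset.mem_filter, Finset.mem_range] at hjf
          obtain ⟨l, hl⟩ := hjf.2
          have hjlt : ((j:ℤ)) < 2*m+1 := by exact_mod_cast hjf.1
          have hj0 : (0:ℤ) ≤ j := Int.natCast_nonneg j
          have h1 : l * p = (j:ℤ) - m := by rw [mul_comm]; linarith [hl]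
          rw [hl, Int.mul_ediv_cancel_left _ hpne]
          refine Finset.mem_Icc.mpr ⟨?_, ?_⟩
          · rw [neg_le]
            refine (Int.le_ediv_iff_mul_le hpz).mpr ?_
            have h3 : -l * p = (m:ℤ) - j := by linear_combination -h1
            linarith
          · refine (Int.le_ediv_iff_mul_le hpz).mpr ?_
            linarith
        · intro l hl
          obtain ⟨hl1, hl2⟩ := Finset.mem_Icc.mp hl
          have hub : l * p ≤ (m:ℤ) := (Int.le_ediv_iff_mul_le hpz).mp hl2
          have hlb : -l * p ≤ (m:ℤ) := (Int.le_ediv_iff_mul_le hpz).mp (neg_le.mp hl1)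
          have h0 : (0:ℤ) ≤ (m:ℤ) + p * l := by
            have : -l * p = -(p * l) := by ring
            linarith
          have hle : (m:ℤ) + p * l ≤ 2*m := by
            have : l * p = p * l := by ring
            linarith
          have hcast : ((((m:ℤ) + p * l).toNat : ℤ)) = (m:ℤ) + p * l := Int.toNat_of_nonneg h0
          refine Finset.mem_filter.mpr ⟨Finset.mem_range.mpr ?_, ⟨l, ?_⟩⟩
          · have : ((((m:ℤ) + p * l).toNat : ℤ)) < ((2*m+1 : ℕ) : ℤ) := by
              rw [hcast]; push_cast; linarith
            exact_mod_cast this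
          · rw [hcast]; ring
        · intro j hjf
          simp only [Finset.mem_filter, Finset.mem_range] at hjf
          obtain ⟨l, hl⟩ := hjf.2
          rw [hl, Int.mul_ediv_cancel_left _ hpne]
          have : (m:ℤ) + p * l = (j:ℤ) := by linarith [hl]
          rw [this]
          simp
        · intro l hl
          obtain ⟨hl1, hl2⟩ := Finset.mem_Icc.mp hl
          have hub : l * p ≤ (m:ℤ) := (Int.le_ediv_iff_mul_le hpz).mp hl2
          have hlb : -l * p ≤ (m:ℤ) := (Int.le_ediv_iff_mul_le hpz).mp (neg_le.mp hl1)
          have h0 : (0:ℤ) ≤ (m:ℤ) + p * l := by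
            have : -l * p = -(p * l) := by ring
            linarith
          have hcast : ((((m:ℤ) + p * l).toNat : ℤ)) = (m:ℤ) + p * l := Int.toNat_of_nonneg h0
          rw [hcast, show (m:ℤ) + p * l - m = p * l from by ring,
            Int.mul_ediv_cancel_left _ hpne]
        · intro j hjf
          simp only [Finset.mem_filter, Finset.mem_range] at hjf
          obtain ⟨l, hl⟩ := hjf.2
          rw [hl, Int.mul_ediv_cancel_left _ hpne]
          have hj0 : (m:ℤ) + p * l = (j:ℤ) := by linarith [hl]
          have htn : ((m:ℤ) + p * l).toNat = j := by rw [hj0]; simp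
          rw [htn]
          have hsign : (-1:ℂ)^(m+j) * (-1:ℂ)^l = (-1:ℂ)^(((p:ℤ)+1)*l) := by
            rw [← zpow_natCast (-1:ℂ) (m+j), ← zpow_add₀ hne1]
            rw [show ((m+j:ℕ):ℤ) + l = 2*(m:ℤ) + ((p:ℤ)+1)*l from by push_cast; linarith [hl]]
            rw [zpow_add₀ hne1,
              show (2*(m:ℤ)) = ((2*m:ℕ):ℤ) from by push_cast; ring, zpow_natCast]
            rw [pow_mul]
            norm_num
          linear_combination (p:ℂ) * ((2*m).choose j : ℂ) * hsign
    _ = ((p : ℝ) * ∑ l ∈ Finset.Icc (-(m / p : ℤ)) (m / p),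
          (-1 : ℝ) ^ (((p : ℤ) + 1) * l) * ((2 * m).choose ((m : ℤ) + p * l).toNat) : ℝ) := by
        push_cast [Complex.ofReal_zpow]
        rw [Finset.mul_sum]
end

section
/- Let p, q be coprime positive integers, n ≥ 1, and let ω be an n-th root of unity. Let α₁,...,αₙ and β₁,...,βₙ be complex numbers with αᵢ^p = βⱼ^q = ω for all i, j, and suppose all αᵢ ≠ t^{-q}-type degeneracies are avoided in the sense that t^q αᵢ ≠ 1 and t^p βⱼ ≠ 1 as polynomials. Then the rational function (t^{pq}ω − 1)^n / (∏ᵢ(t^q αᵢ − 1) ∏ⱼ(t^p βⱼ − 1)), whenever it is a Laurent polynomial, has all coefficients algebraic integers. -/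
open Finset Polynomial

/-!
Over `ℂ` the denominator divides the numerator by counting root multiplicities. A root `t` of
the numerator, `t ^ (p * q) * ω = 1`, has multiplicity `n` there. Since `X ^ q * C a - 1` is
separable, `t` is a root of the denominator of multiplicity at most
`#{i | αᵢ = (t ^ q)⁻¹} + #{j | βⱼ = (t ^ p)⁻¹} ≤ n`, and every root of the denominator is a root of
the numerator. The numerator is monic with algebraic integer coefficients, so by Gauss's lemma
the quotient has algebraic integer coefficients as soon as its leading coefficient
`(∏ αᵢ ∏ βⱼ)⁻¹` is an algebraic integer, and it is a root of unity.
-/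

theorem isIntegral_of_pow_eq_one {R A : Type*} [CommRing R] [Ring A] [Algebra R A] {x : A} {m : ℕ}
    (hm : m ≠ 0) (hx : x ^ m = 1) : IsIntegral R x :=
  .of_pow (Nat.pos_of_ne_zero hm) (hx ▸ isIntegral_one)

theorem card_filter_eq_add_card_filter_eq_le {ι M : Type*} [Fintype ι] [DecidableEq M]
    {α β : ι → M} (h : ∀ i j, #{i' | α i' = α i} + #{j' | β j' = β j} ≤ Fintype.card ι)
    (a b : M) : #{i | α i = a} + #{j | β j = b} ≤ Fintype.card ι := by
  have hle : ∀ γ : ι → M, ∀ c, #{i | γ i = c} ≤ Fintype.card ι := fun γ c =>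
    (card_filter_le _ _).trans_eq card_univ
  rcases em (∃ i, α i = a) with ⟨i, rfl⟩ | ha
  · rcases em (∃ j, β j = b) with ⟨j, rfl⟩ | hb
    · exact h i j
    · rw [filter_false_of_mem fun j _ hj => hb ⟨j, hj⟩, card_empty, add_zero]
      exact hle α _
  · rw [filter_false_of_mem fun i _ hi => ha ⟨i, hi⟩, card_empty, zero_add]
    exact hle β b

section

variable {K : Type*} [Field K] {m : ℕ}

theorem X_pow_mul_C_sub_one_ne_zero (hm : m ≠ 0) (a : K) : (X ^ m * C a - 1 : K[X]) ≠ 0 :=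
  fun h => by simpa [hm] using congrArg (eval 0) h

theorem X_pow_mul_C_sub_one_eq {a : K} (ha : a ≠ 0) :
    (X ^ m * C a - 1 : K[X]) = C a * (X ^ m - C a⁻¹) := by
  rw [mul_sub, ← C_mul, mul_inv_cancel₀ ha, C_1, mul_comm (C a)]

theorem leadingCoeff_X_pow_mul_C_sub_one (hm : m ≠ 0) {a : K} (ha : a ≠ 0) :
    (X ^ m * C a - 1 : K[X]).leadingCoeff = a := by
  rw [X_pow_mul_C_sub_one_eq ha, leadingCoeff_mul, leadingCoeff_C,
    (monic_X_pow_sub_C _ hm).leadingCoeff, mul_one]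

theorem leadingCoeff_prod_X_pow_mul_C_sub_one {ι : Type*} [Fintype ι] (hm : m ≠ 0) {α : ι → K}
    (hα : ∀ i, α i ≠ 0) : (∏ i, (X ^ m * C (α i) - 1)).leadingCoeff = ∏ i, α i := by
  rw [leadingCoeff_prod]
  exact prod_congr rfl fun i _ => leadingCoeff_X_pow_mul_C_sub_one hm (hα i)

theorem isIntegral_coeff_of_dvd_monic {R : Type*} [CommRing R] [Algebra R K] {f g : K[X]}
    (hf : f.Monic) (hfR : f ∈ lifts (algebraMap (integralClosure R K) K)) (hgf : g ∣ f)
    (hg : IsIntegral R g.leadingCoeff) (k : ℕ) : IsIntegral R (g.coeff k) := by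
  obtain ⟨f', hf'map, -, hf'⟩ := lifts_and_degree_eq_and_monic hfR hf
  have hg0 : g ≠ 0 := ne_zero_of_dvd_ne_zero hf.ne_zero hgf
  set g₀ := g * C g.leadingCoeff⁻¹
  have hg₀f : g₀ ∣ f'.map (algebraMap (integralClosure R K) K) := by
    rwa [IsUnit.mul_right_dvd (isUnit_C.2 (inv_ne_zero (leadingCoeff_ne_zero.2 hg0)).isUnit),
      hf'map]
  obtain ⟨c, hc⟩ := (lifts_iff_coeff_lifts _).1 (integralClosure.mem_lifts_of_monic_of_dvd_map K
    hf' (monic_mul_leadingCoeff_inv hg0) hg₀f) k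
  have hg₀k : IsIntegral R (g₀.coeff k) := hc ▸ isIntegral_trans _ c.2
  have hgg₀ : g = g₀ * C g.leadingCoeff := by
    rw [mul_assoc, ← C_mul, inv_mul_cancel₀ (leadingCoeff_ne_zero.2 hg0), C_1, mul_one]
  rw [hgg₀, coeff_mul_C]
  exact hg₀k.mul hg

variable [DecidableEq K]

theorem le_count_roots_X_pow_mul_C_sub_one_pow (hm : m ≠ 0) {ω t : K} (ht : t ^ m * ω = 1)
    (n : ℕ) : n ≤ ((X ^ m * C ω - 1 : K[X]) ^ n).roots.count t := by
  rw [roots_pow, Multiset.count_nsmul]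
  refine Nat.le_mul_of_pos_right n (Multiset.one_le_count_iff_mem.2 ?_)
  exact (mem_roots (X_pow_mul_C_sub_one_ne_zero hm ω)).2 (by simp [mul_comm ω, ht])

variable [CharZero K]

theorem count_roots_X_pow_mul_C_sub_one_le (hm : m ≠ 0) (a t : K) :
    (X ^ m * C a - 1 : K[X]).roots.count t ≤ if t ^ m * a = 1 then 1 else 0 := by
  split_ifs with ht
  · have ha : a ≠ 0 := right_ne_zero_of_mul_eq_one ht
    rw [X_pow_mul_C_sub_one_eq ha, roots_C_mul _ ha]
    exact count_roots_le_one (separable_X_pow_sub_C _ (Nat.cast_ne_zero.2 hm) (inv_ne_zero ha)) t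
  · rw [Nat.le_zero, Multiset.count_eq_zero]
    refine fun hroot => ht ?_
    have := (mem_roots'.1 hroot).2
    rwa [IsRoot.def, eval_sub, eval_mul, eval_pow, eval_X, eval_C, eval_one, sub_eq_zero] at this

theorem count_roots_prod_X_pow_mul_C_sub_one_le {ι : Type*} [Fintype ι] (hm : m ≠ 0)
    (α : ι → K) (t : K) :
    (∏ i, (X ^ m * C (α i) - 1)).roots.count t ≤ #{i | t ^ m * α i = 1} := by
  rw [roots_prod _ _ (prod_ne_zero_iff.2 fun i _ => X_pow_mul_C_sub_one_ne_zero hm (α i)),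
    Multiset.count_bind, card_filter]
  exact sum_le_sum fun i _ => count_roots_X_pow_mul_C_sub_one_le hm (α i) t

theorem prod_mul_prod_dvd_pow [IsAlgClosed K] {ι : Type*} [Fintype ι] {p q : ℕ} (hp : p ≠ 0)
    (hq : q ≠ 0) {ω : K} {α β : ι → K} (hα : ∀ i, α i ^ p = ω) (hβ : ∀ j, β j ^ q = ω)
    (hmult : ∀ a b, #{i | α i = a} + #{j | β j = b} ≤ Fintype.card ι) :
    (∏ i, (X ^ q * C (α i) - 1)) * ∏ j, (X ^ p * C (β j) - 1) ∣
      (X ^ (p * q) * C ω - 1) ^ Fintype.card ι := by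
  have hne : (∏ i, (X ^ q * C (α i) - 1)) * ∏ j, (X ^ p * C (β j) - 1) ≠ 0 :=
    mul_ne_zero (prod_ne_zero_iff.2 fun i _ => X_pow_mul_C_sub_one_ne_zero hq (α i))
      (prod_ne_zero_iff.2 fun j _ => X_pow_mul_C_sub_one_ne_zero hp (β j))
  refine (IsAlgClosed.splits _).dvd_of_roots_le_roots hne (Multiset.le_iff_count.2 fun t => ?_)
  rw [roots_mul hne, Multiset.count_add]
  refine (add_le_add (count_roots_prod_X_pow_mul_C_sub_one_le hq α t)
    (count_roots_prod_X_pow_mul_C_sub_one_le hp β t)).trans ?_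
  by_cases ht : t ^ (p * q) * ω = 1
  · have hfiber : ∀ {m} (γ : ι → K), #{i | t ^ m * γ i = 1} ≤ #{i | γ i = (t ^ m)⁻¹} :=
      fun γ => card_le_card (monotone_filter_right _ fun i _ => eq_inv_of_mul_eq_one_right)
    exact (add_le_add (hfiber α) (hfiber β)).trans
      ((hmult _ _).trans (le_count_roots_X_pow_mul_C_sub_one_pow (mul_ne_zero hp hq) ht _))
  · have hempty : ∀ {m k} (γ : ι → K), (∀ i, γ i ^ k = ω) → m * k = p * q →
        #{i | t ^ m * γ i = 1} = 0 := fun γ hγ hmk =>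
      card_eq_zero.2 (filter_eq_empty_iff.2 fun i _ hi =>
        ht (by rw [← hmk, pow_mul, ← hγ i, ← mul_pow, hi, one_pow]))
    rw [hempty α hα (mul_comm q p), hempty β hβ rfl]
    exact Nat.zero_le _

end

theorem stmt6_general (p q n : ℕ) (hp : 0 < p) (hq : 0 < q)
    (hn : 1 ≤ n) (ω : ℂ) (hω : ω ^ n = 1)
    (α β : Fin n → ℂ) (hα : ∀ i, α i ^ p = ω) (hβ : ∀ j, β j ^ q = ω)
    (hmult : ∀ i j,
      (Finset.univ.filter fun i' => α i' = α i).card +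
        (Finset.univ.filter fun j' => β j' = β j).card ≤ n) :
    ∃ F : Polynomial ℂ, (∀ k, IsIntegral ℤ (F.coeff k)) ∧
      F * (∏ i, (X ^ q * C (α i) - 1)) * (∏ j, (X ^ p * C (β j) - 1))
        = (X ^ (p * q) * C ω - 1) ^ n := by
  classical
  have hn0 : n ≠ 0 := Nat.one_le_iff_ne_zero.mp hn
  have hω0 : ω ≠ 0 := by rintro rfl; simp [zero_pow hn0] at hω
  obtain ⟨F, hF⟩ := Fintype.card_fin n ▸ prod_mul_prod_dvd_pow hp.ne' hq.ne' hα hβ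
    (card_filter_eq_add_card_filter_eq_le (by rwa [Fintype.card_fin]))
  have hG : ((X ^ (p * q) * C ω - 1) ^ n : ℂ[X]).Monic := by
    rw [Monic, leadingCoeff_pow,
      leadingCoeff_X_pow_mul_C_sub_one (mul_ne_zero hp.ne' hq.ne') hω0, hω]
  have hGℤ :
      ((X ^ (p * q) * C ω - 1) ^ n : ℂ[X]) ∈ lifts (algebraMap (integralClosure ℤ ℂ) ℂ) :=
    ⟨(X ^ (p * q) * C ⟨ω, isIntegral_of_pow_eq_one hn0 hω⟩ - 1) ^ n, by simp⟩
  have hlc : F.leadingCoeff = (∏ i, (α i)⁻¹) * ∏ j, (β j)⁻¹ := by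
    have h := congrArg leadingCoeff hF
    rw [hG.leadingCoeff, leadingCoeff_mul, leadingCoeff_mul,
      leadingCoeff_prod_X_pow_mul_C_sub_one hq.ne' fun i => ne_zero_pow hp.ne' (hα i ▸ hω0),
      leadingCoeff_prod_X_pow_mul_C_sub_one hp.ne' fun j => ne_zero_pow hq.ne' (hβ j ▸ hω0)] at h
    rw [eq_inv_of_mul_eq_one_right h.symm, mul_inv, prod_inv_distrib, prod_inv_distrib]
  have hinv : ∀ {m} {x : ℂ}, m ≠ 0 → x ^ m = ω → IsIntegral ℤ x⁻¹ := fun hm hx =>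
    isIntegral_of_pow_eq_one (mul_ne_zero hm hn0) (by rw [inv_pow, pow_mul, hx, hω, inv_one])
  refine ⟨F, isIntegral_coeff_of_dvd_monic hG hGℤ (Dvd.intro_left _ hF.symm) ?_, by rw [hF]; ring⟩
  rw [hlc]
  exact (IsIntegral.prod _ fun i _ => hinv hp.ne' (hα i)).mul
    (IsIntegral.prod _ fun j _ => hinv hq.ne' (hβ j))

/-- The twisted Alexander polynomial of the `(p,q)` torus knot at an irreducible
`SL_n(ℂ)`-representation: the rational function
`(t^{pq} ω − 1)^n / (∏ᵢ (t^q αᵢ − 1) ∏ⱼ (t^p βⱼ − 1))`, whenever it is a (Laurent)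
polynomial, has all coefficients algebraic integers. -/
theorem stmt6 (p q n : ℕ) (hp : 0 < p) (hq : 0 < q) (hpq : Nat.Coprime p q)
    (hn : 1 ≤ n) (ω : ℂ) (hω : ω ^ n = 1)
    (α β : Fin n → ℂ) (hα : ∀ i, α i ^ p = ω) (hβ : ∀ j, β j ^ q = ω)
    (hmult : ∀ i j,
      (Finset.univ.filter fun i' => α i' = α i).card +
        (Finset.univ.filter fun j' => β j' = β j).card ≤ n) :
    ∃ F : Polynomial ℂ, (∀ k, IsIntegral ℤ (F.coeff k)) ∧
      F * (∏ i, (X ^ q * C (α i) - 1)) * (∏ j, (X ^ p * C (β j) - 1))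
        = (X ^ (p * q) * C ω - 1) ^ n :=
  stmt6_general p q n hp hq hn ω hω α β hα hβ hmult
end

section
/- For integers p ≥ 2 and m ≥ 0, the quantity ∑_{a odd, 0<a<p} (2sin²(aπ/(2p)))^m equals (p/2^{m+1}) ∑_{l=-⌊m/p⌋}^{⌊m/p⌋} (-1)^{(p+1)l} C(2m, m+pl) − 2^{m−1} ε_p, and this number lies in (1/2^m)ℤ, i.e., 2^m times it is an integer. -/
open Finset Real

section Stmt12Aux
open Complex

noncomputable def om (p : ℕ) : ℂ := Complex.exp (Real.pi * I / p)

lemma om_ne_zero (p : ℕ) : om p ≠ 0 := Complex.exp_ne_zero _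

lemma om_zpow (p : ℕ) (a : ℤ) : om p ^ a = Complex.exp (a * (Real.pi * I / p)) := by
  rw [Complex.exp_int_mul, om]

lemma om_two_p (p : ℕ) (hp : p ≠ 0) : om p ^ ((2 * p : ℕ) : ℤ) = 1 := by
  rw [om_zpow]
  have : (((2 * p : ℕ) : ℤ) : ℂ) * (Real.pi * I / p) = (1 : ℤ) * (2 * Real.pi * I) := by
    have : (p : ℂ) ≠ 0 := Nat.cast_ne_zero.2 hp
    push_cast
    field_simp
  rw [this, Complex.exp_int_mul_two_pi_mul_I]

lemma om_p (p : ℕ) (hp : p ≠ 0) : om p ^ ((p : ℕ) : ℤ) = -1 := by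
  rw [om_zpow]
  have : (((p : ℕ) : ℤ) : ℂ) * (Real.pi * I / p) = Real.pi * I := by
    have : (p : ℂ) ≠ 0 := Nat.cast_ne_zero.2 hp
    push_cast
    field_simp
  rw [this, Complex.exp_pi_mul_I]

lemma om_eq_one_iff (p : ℕ) (hp : p ≠ 0) (j : ℤ) : om p ^ (2 * j) = 1 ↔ (p : ℤ) ∣ j := by
  rw [om_zpow, Complex.exp_eq_one_iff]
  have hpC : (p : ℂ) ≠ 0 := Nat.cast_ne_zero.2 hp
  have hpi : (Real.pi : ℂ) ≠ 0 := by
    exact_mod_cast Real.pi_ne_zero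
  constructor
  · rintro ⟨n, hn⟩
    refine ⟨n, ?_⟩
    have : ((2 * j : ℤ) : ℂ) * (Real.pi * I / p) - (n : ℂ) * (2 * Real.pi * I) = 0 := by
      rw [hn]; ring
    have h2 : ((j : ℂ) - n * p) * (2 * Real.pi * I / p) = 0 := by
      rw [← this]; push_cast; field_simp
    have h3 : ((j : ℂ) - n * p) = 0 := by
      rcases mul_eq_zero.1 h2 with h | h
      · exact h
      · exfalso; apply Complex.I_ne_zero
        field_simp at h
        simp [Real.pi_ne_zero] at h
    have : (j : ℂ) = (p : ℂ) * n := by linear_combination h3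
    exact_mod_cast this
  · rintro ⟨n, hn⟩
    refine ⟨n, ?_⟩
    rw [hn]; push_cast; field_simp

lemma geom (p : ℕ) (hp : p ≠ 0) (j : ℤ) :
    ∑ b ∈ range p, (om p ^ (2 * j)) ^ b = if (p : ℤ) ∣ j then (p : ℂ) else 0 := by
  by_cases h : (p : ℤ) ∣ j
  · simp [if_pos h, (om_eq_one_iff p hp j).2 h]
  · rw [if_neg h]
    have hx : om p ^ (2 * j) ≠ 1 := fun hx => h ((om_eq_one_iff p hp j).1 hx)
    rw [geom_sum_eq hx]
    have hnum : (om p ^ (2 * j)) ^ p = 1 := by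
      rw [← zpow_natCast (om p ^ (2*j)) p, ← zpow_mul]
      have : 2 * j * (p : ℤ) = 2 * ((j * p)) := by ring
      rw [this, om_eq_one_iff p hp]
      exact ⟨j, by ring⟩
    rw [hnum]
    simp

lemma odd_range_image (p : ℕ) :
    (range (2 * p)).filter (fun a => Odd a) = (range p).image (fun b => 2 * b + 1) := by
  ext a
  simp only [mem_filter, mem_range, mem_image, Nat.odd_iff]
  constructor
  · rintro ⟨h1, h2⟩; exact ⟨a / 2, by omega, by omega⟩
  · rintro ⟨b, h1, rfl⟩; omega

lemma Gval (p : ℕ) (hp : p ≠ 0) (j : ℤ) :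
    ∑ a ∈ (range (2 * p)).filter (fun a => Odd a), om p ^ ((a : ℤ) * j)
      = if (p : ℤ) ∣ j then ((-1 : ℂ) ^ (j / p) * p) else 0 := by
  rw [odd_range_image, Finset.sum_image (by intro x _ y _ h; beta_reduce at h; omega)]
  have heach : ∀ b : ℕ, om p ^ (((2 * b + 1 : ℕ) : ℤ) * j) = om p ^ j * (om p ^ (2 * j)) ^ b := by
    intro b
    rw [← zpow_natCast (om p ^ (2*j)) b, ← zpow_mul, ← zpow_add₀ (om_ne_zero p)]
    congr 1
    push_cast; ring
  rw [Finset.sum_congr rfl (fun b _ => heach b), ← Finset.mul_sum, geom p hp j]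
  by_cases h : (p : ℤ) ∣ j
  · rw [if_pos h, if_pos h]
    have hj : j = (p : ℤ) * (j / p) := (Int.mul_ediv_cancel' h).symm
    have : om p ^ j = (-1 : ℂ) ^ (j / p) := by
      rw [hj, zpow_mul, om_p p hp]
      rw [← hj]
    rw [this]
  · simp [if_neg h]

lemma split_sum (p : ℕ) (hp : 0 < p) (f : ℕ → ℂ) :
    ∑ a ∈ (range (2 * p)).filter (fun a => Odd a), f a
      = (∑ a ∈ (Ioo 0 p).filter (fun a => Odd a), f a)
        + (if Odd p then f p else 0)
        + ∑ a ∈ (Ioo 0 p).filter (fun a => Odd a), f (2 * p - a) := by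
  have h1 : (range (2*p)).filter (fun a => Odd a)
      = ((Ioo 0 p).filter (fun a => Odd a)) ∪ ((Ico p (2*p)).filter (fun a => Odd a)) := by
    ext a
    simp only [mem_filter, mem_range, mem_union, mem_Ioo, mem_Ico, Nat.odd_iff]
    omega
  have hdisj : Disjoint ((Ioo 0 p).filter (fun a => Odd a)) ((Ico p (2*p)).filter (fun a => Odd a)) := by
    simp only [Finset.disjoint_left, mem_filter, mem_Ioo, mem_Ico]
    rintro a ⟨⟨_, h⟩, _⟩ ⟨⟨h', _⟩, _⟩
    omega
  rw [h1, Finset.sum_union hdisj, add_assoc]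
  congr 1
  have h2 : (Ico p (2*p)).filter (fun a => Odd a)
      = (if Odd p then {p} else ∅) ∪ ((Ioo 0 p).filter (fun a => Odd a)).image (fun a => 2*p - a) := by
    ext a
    simp only [mem_filter, mem_Ico, mem_union, mem_image, mem_Ioo, Nat.odd_iff]
    constructor
    · rintro ⟨⟨h1', h2'⟩, h3'⟩
      rcases eq_or_lt_of_le h1' with rfl | hlt
      · left
        rw [if_pos h3']
        exact Finset.mem_singleton_self _
      · right; exact ⟨2*p - a, by omega, by omega⟩
    · intro h
      rcases h with h | ⟨b, ⟨⟨hb1, hb2⟩, hb3⟩, rfl⟩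
      · split_ifs at h with hop
        · simp only [mem_singleton] at h; subst h
          omega
        · simp at h
      · omega
  rw [h2, Finset.sum_union, Finset.sum_image (by intro x hx y hy h; simp [mem_filter, mem_Ioo] at hx hy; beta_reduce at h; omega)]
  · congr 1
    split_ifs <;> simp
  · simp only [Finset.disjoint_left]
    intro a ha hb
    split_ifs at ha with hop
    · simp only [mem_singleton] at ha; subst ha
      simp only [mem_image, mem_filter, mem_Ioo] at hb
      obtain ⟨b, ⟨⟨h1', h2'⟩, _⟩, h3'⟩ := hb
      omega
    · simp at ha

lemma expand_pow (w : ℂ) (hw : w ≠ 0) (m : ℕ) :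
    (-(w - w⁻¹) ^ 2) ^ m
      = ∑ k ∈ range (2 * m + 1), (-1 : ℂ) ^ (m + k) * ((2 * m).choose k) * w ^ (2 * (k : ℤ) - 2 * m) := by
  have h1 : (-(w - w⁻¹) ^ 2) ^ m = (-1 : ℂ) ^ m * ((w - w⁻¹) ^ (2 * m)) := by
    rw [neg_pow, pow_mul]
  rw [h1, sub_pow, Finset.mul_sum]
  apply Finset.sum_congr rfl
  intro k hk
  simp only [mem_range] at hk
  have hk' : k ≤ 2 * m := by omega
  have hw2 : w ^ (k : ℕ) * (w⁻¹) ^ (2*m - k : ℕ) = w ^ (2 * (k : ℤ) - 2 * m) := by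
    rw [← zpow_natCast w k, inv_pow, ← zpow_natCast w (2*m-k), ← zpow_neg, ← zpow_add₀ hw]
    congr 1
    push_cast [hk']
    ring
  calc (-1:ℂ) ^ m * ((-1) ^ (k + 2*m) * w ^ k * w⁻¹ ^ (2*m - k) * ((2*m).choose k))
      = ((-1:ℂ) ^ (m + (k + 2*m))) * ((2*m).choose k) * (w ^ k * w⁻¹ ^ (2*m-k)) := by
        rw [pow_add]; ring
    _ = (-1 : ℂ) ^ (m + k) * ((2 * m).choose k) * w ^ (2 * (k : ℤ) - 2 * m) := by
        rw [hw2, show m + (k + 2*m) = (m+k) + 2*m from by ring, pow_add, pow_mul,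
          neg_one_sq, one_pow, mul_one]

lemma four_sin_sq (z : ℂ) : 4 * Complex.sin z ^ 2
    = 2 - Complex.exp (2 * z * I) - Complex.exp (-(2 * z * I)) := by
  have huv : Complex.exp (z * I) * Complex.exp (-z * I) = 1 := by
    rw [← Complex.exp_add]; ring_nf; exact Complex.exp_zero
  have h2 : Complex.exp (2 * z * I) = Complex.exp (z * I) * Complex.exp (z * I) := by
    rw [← Complex.exp_add]; ring_nf
  have h3 : Complex.exp (-(2 * z * I)) = Complex.exp (-z * I) * Complex.exp (-z * I) := by
    rw [← Complex.exp_add]; ring_nf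
  rw [Complex.sin, h2, h3]
  linear_combination (Complex.exp (-z*I) - Complex.exp (z*I))^2 * Complex.I_sq + 2 * huv

lemma sin_term (p : ℕ) (hp : p ≠ 0) (a m : ℕ) :
    (((2 * Real.sin ((a : ℝ) * Real.pi / (2 * (p : ℝ))) ^ 2) ^ m : ℝ) : ℂ) * 2 ^ m
      = ∑ k ∈ range (2 * m + 1),
          (-1 : ℂ) ^ (m + k) * ((2 * m).choose k) * om p ^ ((a : ℤ) * ((k : ℤ) - (m : ℤ))) := by
  have hpC : (p : ℂ) ≠ 0 := Nat.cast_ne_zero.2 hp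
  set w : ℂ := Complex.exp ((a : ℂ) * Real.pi * I / (2 * p)) with hw
  have hwne : w ≠ 0 := Complex.exp_ne_zero _
  have key : (((2 * Real.sin ((a : ℝ) * Real.pi / (2 * (p : ℝ))) ^ 2) : ℝ) : ℂ) * 2
      = -(w - w⁻¹) ^ 2 := by
    have h1 : (((2 * Real.sin ((a : ℝ) * Real.pi / (2 * (p : ℝ))) ^ 2) : ℝ) : ℂ) * 2
        = 4 * Complex.sin (((a : ℝ) * Real.pi / (2 * (p : ℝ)) : ℝ)) ^ 2 := by
      push_cast
      ring
    rw [h1, four_sin_sq]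
    have e1 : Complex.exp (2 * (((a : ℝ) * Real.pi / (2 * (p : ℝ)) : ℝ) : ℂ) * I) = w ^ 2 := by
      rw [hw, ← Complex.exp_nat_mul]
      congr 1
      push_cast
      field_simp
    have e2 : Complex.exp (-(2 * (((a : ℝ) * Real.pi / (2 * (p : ℝ)) : ℝ) : ℂ) * I)) = (w ^ 2)⁻¹ := by
      rw [Complex.exp_neg, e1]
    rw [e1, e2]
    have : (w - w⁻¹) ^ 2 = w ^ 2 - 2 + (w ^ 2)⁻¹ := by
      field_simp
      ring
    rw [this]
    ring
  have hcast : (((2 * Real.sin ((a : ℝ) * Real.pi / (2 * (p : ℝ))) ^ 2) ^ m : ℝ) : ℂ) * 2 ^ m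
      = ((((2 * Real.sin ((a : ℝ) * Real.pi / (2 * (p : ℝ))) ^ 2) : ℝ) : ℂ) * 2) ^ m := by
    rw [Complex.ofReal_pow, ← mul_pow]
  rw [hcast, key, expand_pow w hwne]
  apply Finset.sum_congr rfl
  intro k hk
  congr 1
  rw [om_zpow, hw, ← Complex.exp_int_mul]
  congr 1
  push_cast
  field_simp

lemma main_complex (p m : ℕ) (hp : 2 ≤ p) :
    2 * ∑ a ∈ (Ioo 0 p).filter (fun a => Odd a),
        (((2 * Real.sin ((a : ℝ) * Real.pi / (2 * (p : ℝ))) ^ 2) ^ m : ℝ) : ℂ) * 2 ^ m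
      = (p : ℂ) * (∑ l ∈ Icc (-(m / p : ℤ)) ((m : ℤ) / p),
            (-1 : ℂ) ^ (((p : ℤ) + 1) * l) * ((2 * m).choose ((m : ℤ) + p * l).toNat))
        - ((p % 2 : ℕ) : ℂ) * 4 ^ m := by
  have hp0 : p ≠ 0 := by omega
  have hp0' : (0:ℕ) < p := by omega
  have hpZ : (0:ℤ) < (p:ℤ) := by exact_mod_cast hp0'
  set F := (Ioo 0 p).filter (fun a => Odd a) with hF
  set S : ℤ → ℂ := fun j => ∑ a ∈ F, om p ^ ((a : ℤ) * j) with hS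
  set c : ℕ → ℂ := fun k => (-1 : ℂ) ^ (m + k) * ((2 * m).choose k) with hc
  -- step 1: T = ∑_k c k * S (k - m)
  have step1 : ∑ a ∈ F, (((2 * Real.sin ((a : ℝ) * Real.pi / (2 * (p : ℝ))) ^ 2) ^ m : ℝ) : ℂ) * 2 ^ m
      = ∑ k ∈ range (2 * m + 1), c k * S ((k : ℤ) - m) := by
    rw [Finset.sum_congr rfl (fun a _ => sin_term p hp0 a m), Finset.sum_comm]
    apply Finset.sum_congr rfl
    intro k _
    rw [hS]
    simp only []
    rw [Finset.mul_sum]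
  -- step 2: reflected version
  have step2 : ∑ k ∈ range (2 * m + 1), c k * S ((k : ℤ) - m)
      = ∑ k ∈ range (2 * m + 1), c k * S ((m : ℤ) - k) := by
    rw [← Finset.sum_range_reflect (fun k => c k * S ((k : ℤ) - m)) (2 * m + 1)]
    apply Finset.sum_congr rfl
    intro k hk
    simp only [mem_range] at hk
    have hk' : k ≤ 2 * m := by omega
    have h1 : (2 * m + 1 - 1 - k) = 2 * m - k := by omega
    rw [h1]
    congr 1
    · rw [hc]
      simp only []
      congr 1
      · rw [neg_one_pow_eq_pow_mod_two, neg_one_pow_eq_pow_mod_two (n := m + k)]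
        congr 1
        omega
      · rw [show (2 * m - k) = 2 * m - k from rfl]
        congr 1
        rw [← Nat.choose_symm hk']
    · congr 1
      push_cast [hk']
      ring
  -- the S(j) + S(-j) formula
  have hSS : ∀ j : ℤ, S j + S (-j)
      = (if (p : ℤ) ∣ j then ((-1 : ℂ) ^ (j / p) * (p : ℂ)) else 0)
        - ((p % 2 : ℕ) : ℂ) * (-1 : ℂ) ^ j := by
    intro j
    have hsplit := split_sum p hp0' (fun a => om p ^ ((a : ℤ) * j))
    rw [Gval p hp0 j] at hsplit
    have hlast : ∑ a ∈ F, om p ^ (((2 * p - a : ℕ) : ℤ) * j) = S (-j) := by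
      apply Finset.sum_congr rfl
      intro a ha
      simp only [hF, mem_filter, mem_Ioo] at ha
      have hle : a ≤ 2 * p := by omega
      have : ((2 * p - a : ℕ) : ℤ) * j = ((2 * p : ℕ) : ℤ) * j + (a : ℤ) * (-j) := by
        push_cast [hle]
        ring
      rw [this, zpow_add₀ (om_ne_zero p), zpow_mul, om_two_p p hp0, one_zpow, one_mul]
    have hmid : (if Odd p then om p ^ (((p : ℕ) : ℤ) * j) else 0)
        = ((p % 2 : ℕ) : ℂ) * (-1 : ℂ) ^ j := by
      rw [zpow_mul, om_p p hp0]
      by_cases hop : Odd p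
      · rw [if_pos hop, Nat.odd_iff.1 hop]
        simp
      · rw [if_neg hop]
        rw [Nat.odd_iff] at hop
        have : p % 2 = 0 := by omega
        rw [this]
        simp
    rw [hlast, hmid] at hsplit
    have : S j = ∑ a ∈ F, om p ^ ((a:ℤ) * j) := rfl
    rw [← this] at hsplit
    linear_combination -hsplit
  -- now 2T
  have h2T : 2 * ∑ a ∈ F, (((2 * Real.sin ((a : ℝ) * Real.pi / (2 * (p : ℝ))) ^ 2) ^ m : ℝ) : ℂ) * 2 ^ m
      = ∑ k ∈ range (2 * m + 1), c k *
          ((if (p : ℤ) ∣ ((k : ℤ) - m) then ((-1 : ℂ) ^ (((k : ℤ) - m) / p) * (p : ℂ)) else 0)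
            - ((p % 2 : ℕ) : ℂ) * (-1 : ℂ) ^ ((k : ℤ) - m)) := by
    rw [two_mul, step1]
    nth_rewrite 2 [step2]
    rw [← Finset.sum_add_distrib]
    apply Finset.sum_congr rfl
    intro k _
    rw [← mul_add]
    congr 1
    rw [show ((m : ℤ) - k) = -((k : ℤ) - m) from by ring]
    linear_combination hSS ((k : ℤ) - m)
  -- epsilon part
  have heps : ∑ k ∈ range (2 * m + 1), c k * (((p % 2 : ℕ) : ℂ) * (-1 : ℂ) ^ ((k : ℤ) - m))
      = ((p % 2 : ℕ) : ℂ) * 4 ^ m := by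
    have hterm : ∀ k ∈ range (2 * m + 1), c k * (((p % 2 : ℕ) : ℂ) * (-1 : ℂ) ^ ((k : ℤ) - m))
        = ((p % 2 : ℕ) : ℂ) * ((2 * m).choose k : ℂ) := by
      intro k _
      rw [hc]
      simp only []
      have : (-1 : ℂ) ^ ((k : ℤ) - m) = (-1 : ℂ) ^ k * (-1 : ℂ) ^ m := by
        rw [sub_eq_add_neg, zpow_add₀ (by norm_num : (-1 : ℂ) ≠ 0), zpow_neg,
          zpow_natCast, zpow_natCast]
        congr 1
        rw [← inv_pow, inv_neg_one]
      rw [this, pow_add]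
      ring_nf
      rw [show m * 2 = 2 * m from by ring, pow_mul, neg_one_sq, one_pow]
      ring_nf
      rw [show k * 2 = 2 * k from by ring, pow_mul, neg_one_sq, one_pow]
      ring
    rw [Finset.sum_congr rfl hterm, ← Finset.mul_sum]
    congr 1
    rw [← Nat.cast_sum]
    rw [Nat.sum_range_choose (2 * m)]
    push_cast
    rw [pow_mul]
    norm_num
  -- main part
  have hmain : ∑ k ∈ range (2 * m + 1), c k *
        (if (p : ℤ) ∣ ((k : ℤ) - m) then ((-1 : ℂ) ^ (((k : ℤ) - m) / p) * (p : ℂ)) else 0)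
      = (p : ℂ) * (∑ l ∈ Icc (-(m / p : ℤ)) ((m : ℤ) / p),
            (-1 : ℂ) ^ (((p : ℤ) + 1) * l) * ((2 * m).choose ((m : ℤ) + p * l).toNat)) := by
    have hterm : ∀ k ∈ range (2 * m + 1), c k *
        (if (p : ℤ) ∣ ((k : ℤ) - m) then ((-1 : ℂ) ^ (((k : ℤ) - m) / p) * (p : ℂ)) else 0)
        = if (p : ℤ) ∣ ((k : ℤ) - m) then (c k * ((-1 : ℂ) ^ (((k : ℤ) - m) / p) * (p : ℂ))) else 0 := by
      intro k _
      rw [mul_ite, mul_zero]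
    rw [Finset.sum_congr rfl hterm, ← Finset.sum_filter]
    rw [Finset.mul_sum]
    refine Finset.sum_nbij' (fun k => ((k : ℤ) - m) / p) (fun l => ((m : ℤ) + p * l).toNat) ?_ ?_ ?_ ?_ ?_
    · intro k hk
      beta_reduce
      simp only [mem_filter, mem_range] at hk
      obtain ⟨hk1, l, hl⟩ := hk
      have hlval : ((k : ℤ) - m) / p = l := by rw [hl]; exact Int.mul_ediv_cancel_left l (by omega)
      rw [hlval, mem_Icc]
      constructor
      · rw [neg_le, Int.le_ediv_iff_mul_le hpZ, show -l * (p:ℤ) = -(p * l) from by ring]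
        omega
      · rw [Int.le_ediv_iff_mul_le hpZ, show l * (p:ℤ) = p * l from by ring]
        omega
    · intro l hl
      beta_reduce
      rw [mem_Icc] at hl
      obtain ⟨hl1, hl2⟩ := hl
      rw [Int.le_ediv_iff_mul_le hpZ] at hl2
      rw [neg_le, Int.le_ediv_iff_mul_le hpZ] at hl1
      have hl1' : -((p:ℤ) * l) ≤ m := by rw [show -((p:ℤ)*l) = -l * p from by ring]; exact hl1
      have hl2' : (p:ℤ) * l ≤ m := by rw [mul_comm]; exact hl2
      simp only [mem_filter, mem_range]
      exact ⟨by omega, l, by omega⟩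
    · intro k hk
      beta_reduce
      simp only [mem_filter, mem_range] at hk
      obtain ⟨hk1, l, hl⟩ := hk
      have hlval : ((k : ℤ) - m) / p = l := by rw [hl]; exact Int.mul_ediv_cancel_left l (by omega)
      rw [hlval]
      omega
    · intro l hl
      beta_reduce
      rw [mem_Icc] at hl
      obtain ⟨hl1, hl2⟩ := hl
      rw [Int.le_ediv_iff_mul_le hpZ] at hl2
      rw [neg_le, Int.le_ediv_iff_mul_le hpZ] at hl1
      have hl1' : -((p:ℤ) * l) ≤ m := by rw [show -((p:ℤ)*l) = -l * p from by ring]; exact hl1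
      have hl2' : (p:ℤ) * l ≤ m := by rw [mul_comm]; exact hl2
      have h1 : (((m : ℤ) + p * l).toNat : ℤ) = (m : ℤ) + p * l := by
        rw [Int.toNat_of_nonneg]; omega
      rw [h1, show (m : ℤ) + p * l - m = p * l from by ring]
      exact Int.mul_ediv_cancel_left l (by omega)
    · intro k hk
      beta_reduce
      simp only [mem_filter, mem_range] at hk
      obtain ⟨hk1, l, hl⟩ := hk
      have hlval : ((k : ℤ) - m) / p = l := by rw [hl]; exact Int.mul_ediv_cancel_left l (by omega)
      rw [hlval]
      have hkl : (k : ℤ) = m + p * l := by omega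
      have htn : ((m : ℤ) + p * l).toNat = k := by omega
      rw [htn, hc]
      simp only []
      have hsign : (-1 : ℂ) ^ (m + k) * (-1 : ℂ) ^ l = (-1 : ℂ) ^ (((p : ℤ) + 1) * l) := by
        rw [← zpow_natCast (-1 : ℂ) (m + k), ← zpow_add₀ (by norm_num : (-1 : ℂ) ≠ 0)]
        rw [show ((m + k : ℕ) : ℤ) + l = ((p : ℤ) + 1) * l + 2 * m from by push_cast; linear_combination hkl]
        rw [zpow_add₀ (by norm_num : (-1 : ℂ) ≠ 0)]
        rw [Even.neg_one_zpow (n := 2 * (m:ℤ)) ⟨(m:ℤ), by ring⟩, mul_one]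
      calc (-1 : ℂ) ^ (m + k) * ((2 * m).choose k : ℂ) * ((-1 : ℂ) ^ l * (p : ℂ))
          = (p : ℂ) * (((-1 : ℂ) ^ (m + k) * (-1 : ℂ) ^ l) * ((2 * m).choose k : ℂ)) := by ring
        _ = (p : ℂ) * ((-1 : ℂ) ^ (((p : ℤ) + 1) * l) * ((2 * m).choose k : ℂ)) := by rw [hsign]
  -- put together
  rw [h2T]
  have : ∑ k ∈ range (2 * m + 1), c k *
        ((if (p : ℤ) ∣ ((k : ℤ) - m) then ((-1 : ℂ) ^ (((k : ℤ) - m) / p) * (p : ℂ)) else 0)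
          - ((p % 2 : ℕ) : ℂ) * (-1 : ℂ) ^ ((k : ℤ) - m))
      = (∑ k ∈ range (2 * m + 1), c k *
          (if (p : ℤ) ∣ ((k : ℤ) - m) then ((-1 : ℂ) ^ (((k : ℤ) - m) / p) * (p : ℂ)) else 0))
        - ∑ k ∈ range (2 * m + 1), c k * (((p % 2 : ℕ) : ℂ) * (-1 : ℂ) ^ ((k : ℤ) - m)) := by
    rw [← Finset.sum_sub_distrib]
    apply Finset.sum_congr rfl
    intro k _
    ring
  rw [this, hmain, heps]

lemma central_even (m : ℕ) (hm : 1 ≤ m) : Even ((2 * m).choose m) := by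
  obtain ⟨m', rfl⟩ : ∃ m', m = m' + 1 := ⟨m - 1, by omega⟩
  rw [show 2 * (m' + 1) = (2 * m' + 1) + 1 from by ring]
  rw [Nat.choose_succ_succ (2 * m' + 1) m']
  have hsymm : (2 * m' + 1).choose m' = (2 * m' + 1).choose (m' + 1) := by
    have := Nat.choose_symm (show m' + 1 ≤ 2 * m' + 1 by omega)
    rw [show 2 * m' + 1 - (m' + 1) = m' from by omega] at this
    exact this
  rw [hsymm]
  exact ⟨(2 * m' + 1).choose (m' + 1), rfl⟩

lemma even_sum (p m : ℕ) (hp : 0 < p) (hm : 1 ≤ m) :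
    Even (∑ l ∈ Icc (-(m / p : ℤ)) ((m : ℤ) / p), ((2 * m).choose ((m : ℤ) + p * l).toNat : ℤ)) := by
  have hpZ : (0 : ℤ) < (p : ℤ) := by exact_mod_cast hp
  set q : ℤ := (m : ℤ) / p with hq
  have hq0 : 0 ≤ q := Int.ediv_nonneg (by positivity) (by positivity)
  have hfneg : ∀ l ∈ Icc (1:ℤ) q, ((2 * m).choose ((m : ℤ) + p * (-l)).toNat : ℤ)
      = ((2 * m).choose ((m : ℤ) + p * l).toNat : ℤ) := by
    intro l hl
    rw [mem_Icc] at hl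
    obtain ⟨hl1, hl2⟩ := hl
    have hpl : (p : ℤ) * l ≤ m := by
      rw [hq, Int.le_ediv_iff_mul_le hpZ] at hl2
      rw [mul_comm]; exact hl2
    have hpl0 : 0 ≤ (p : ℤ) * l := by positivity
    have hmm : (p:ℤ) * (-l) = -((p:ℤ) * l) := by ring
    rw [hmm]
    set j : ℕ := ((p : ℤ) * l).toNat with hj
    have hjval : (j : ℤ) = (p : ℤ) * l := Int.toNat_of_nonneg hpl0
    have h1 : ((m : ℤ) + -((p:ℤ) * l)).toNat = m - j := by omega
    have h2 : ((m : ℤ) + p * l).toNat = m + j := by omega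
    rw [h1, h2]
    have := Nat.choose_symm (show m + j ≤ 2 * m by omega)
    rw [show 2 * m - (m + j) = m - j from by omega] at this
    exact_mod_cast this
  have hneg : ∑ l ∈ Icc (-q) (-1), ((2 * m).choose ((m : ℤ) + p * l).toNat : ℤ)
      = ∑ l ∈ Icc (1:ℤ) q, ((2 * m).choose ((m : ℤ) + p * l).toNat : ℤ) := by
    refine Finset.sum_nbij' (fun l => -l) (fun l => -l) ?_ ?_ ?_ ?_ ?_
    · intro a ha; beta_reduce; rw [mem_Icc] at ha ⊢; omega
    · intro a ha; beta_reduce; rw [mem_Icc] at ha ⊢; omega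
    · intro a _; beta_reduce; rw [neg_neg]
    · intro a _; beta_reduce; rw [neg_neg]
    · intro a ha
      beta_reduce
      rw [mem_Icc] at ha
      have := hfneg (-a) (by rw [mem_Icc]; omega)
      rw [neg_neg] at this
      exact this
  have hsplit : Icc (-q) q = Icc (-q) (-1) ∪ Icc 0 q := by
    ext x; simp only [mem_Icc, mem_union]; omega
  have hdisj : Disjoint (Icc (-q) (-1)) (Icc (0:ℤ) q) := by
    simp only [Finset.disjoint_left, mem_Icc]
    intro a h1 h2; omega
  have hzero : Icc (0:ℤ) q = insert 0 (Icc 1 q) := by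
    ext x; simp only [mem_Icc, mem_insert]; omega
  rw [hsplit, Finset.sum_union hdisj, hneg, hzero,
    Finset.sum_insert (by rw [mem_Icc]; omega)]
  have hc0 : ((2 * m).choose ((m : ℤ) + p * 0).toNat : ℤ) = ((2 * m).choose m : ℤ) := by
    norm_num
  rw [hc0]
  have heven : Even ((2*m).choose m : ℤ) := (central_even m hm).natCast (α := ℤ)
  obtain ⟨c, hc⟩ := heven
  exact ⟨c + ∑ l ∈ Icc (1:ℤ) q, ((2 * m).choose ((m : ℤ) + p * l).toNat : ℤ), by rw [hc]; ring⟩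

end Stmt12Aux

theorem stmt12 (p m : ℕ) (hp : 2 ≤ p) :
    (∑ a ∈ (Finset.Ioo 0 p).filter (fun a => Odd a),
        (2 * Real.sin (a * Real.pi / (2 * p)) ^ 2) ^ m
      = (p : ℝ) / 2 ^ (m + 1) *
          ∑ l ∈ Finset.Icc (-(m / p : ℤ)) (m / p),
            (-1 : ℝ) ^ (((p : ℤ) + 1) * l) * ((2 * m).choose ((m : ℤ) + p * l).toNat)
        - (2 : ℝ) ^ ((m : ℤ) - 1) * (p % 2 : ℕ)) ∧
    ∃ z : ℤ, (2 : ℝ) ^ m *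
        ∑ a ∈ (Finset.Ioo 0 p).filter (fun a => Odd a),
          (2 * Real.sin (a * Real.pi / (2 * p)) ^ 2) ^ m = z := by
  set L : ℝ := ∑ a ∈ (Finset.Ioo 0 p).filter (fun a => Odd a),
      (2 * Real.sin (a * Real.pi / (2 * p)) ^ 2) ^ m with hL
  set Sr : ℝ := ∑ l ∈ Finset.Icc (-(m / p : ℤ)) ((m : ℤ) / p),
      (-1 : ℝ) ^ (((p : ℤ) + 1) * l) * ((2 * m).choose ((m : ℤ) + p * l).toNat) with hSr
  set Sz : ℤ := ∑ l ∈ Finset.Icc (-(m / p : ℤ)) ((m : ℤ) / p),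
      (if Even (((p : ℤ) + 1) * l) then (1 : ℤ) else -1) * ((2 * m).choose ((m : ℤ) + p * l).toNat) with hSz
  set ep : ℕ := p % 2 with hep
  -- real version of the key identity
  have E : (2 : ℝ) ^ (m + 1) * L = p * Sr - (ep : ℕ) * 4 ^ m := by
    have h := main_complex p m hp
    have hcast1 : 2 * ∑ a ∈ (Ioo 0 p).filter (fun a => Odd a),
        (((2 * Real.sin ((a : ℝ) * Real.pi / (2 * (p : ℝ))) ^ 2) ^ m : ℝ) : ℂ) * 2 ^ m
        = (((2 : ℝ) ^ (m + 1) * L : ℝ) : ℂ) := by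
      rw [hL, Complex.ofReal_mul, Complex.ofReal_sum, Finset.mul_sum, Finset.mul_sum]
      apply Finset.sum_congr rfl
      intro a _
      push_cast
      ring
    have hScast : (∑ l ∈ Icc (-(m / p : ℤ)) ((m : ℤ) / p),
            (-1 : ℂ) ^ (((p : ℤ) + 1) * l) * ((2 * m).choose ((m : ℤ) + p * l).toNat))
        = ((Sr : ℝ) : ℂ) := by
      rw [hSr, Complex.ofReal_sum]
      apply Finset.sum_congr rfl
      intro l _
      rw [Complex.ofReal_mul, Complex.ofReal_zpow]
      norm_num
    rw [hcast1, hScast] at h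
    rw [hep]
    exact_mod_cast h
  have hSrz : Sr = (Sz : ℝ) := by
    rw [hSr, hSz]
    push_cast
    apply Finset.sum_congr rfl
    intro l _
    by_cases he : Even (((p : ℤ) + 1) * l)
    · rw [Even.neg_one_zpow he, if_pos he]
    · rw [Odd.neg_one_zpow (Int.not_even_iff_odd.1 he), if_neg he]
  have h2ne : ((2 : ℝ) ^ (m + 1)) ≠ 0 := by positivity
  have hz4 : (2 : ℝ) ^ ((m : ℤ) - 1) * 2 ^ (m + 1) = 4 ^ m := by
    rw [show ((2 : ℝ) ^ (m + 1) = (2 : ℝ) ^ ((m + 1 : ℕ) : ℤ)) from (zpow_natCast 2 (m + 1)).symm,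
      ← zpow_add₀ (two_ne_zero), show ((m : ℤ) - 1) + ((m + 1 : ℕ) : ℤ) = ((2 * m : ℕ) : ℤ) from by
        push_cast; ring, zpow_natCast, pow_mul]
    norm_num
  constructor
  · have key : (p : ℝ) / 2 ^ (m + 1) * Sr - (2 : ℝ) ^ ((m : ℤ) - 1) * (ep : ℕ)
        = ((p : ℝ) * Sr - (ep : ℕ) * 4 ^ m) / 2 ^ (m + 1) := by
      rw [sub_div]
      congr 1
      · ring
      · rw [eq_div_iff h2ne]
        linear_combination ((ep : ℕ) : ℝ) * hz4
    rw [key, eq_div_iff h2ne]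
    linarith [E]
  · have hpar : ∃ z : ℤ, (p : ℤ) * Sz - (ep : ℕ) * 4 ^ m = 2 * z := by
      rcases Nat.even_or_odd p with hpe | hpo
      · have h0 : ep = 0 := by rw [hep]; exact Nat.even_iff.1 hpe
        obtain ⟨t, ht⟩ := hpe
        exact ⟨t * Sz, by rw [h0]; push_cast [ht]; ring⟩
      · have h1 : ep = 1 := by rw [hep]; exact Nat.odd_iff.1 hpo
        have hsign : ∀ l ∈ Finset.Icc (-(m / p : ℤ)) ((m : ℤ) / p),
            (if Even (((p : ℤ) + 1) * l) then (1 : ℤ) else -1) = 1 := by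
          intro l _
          rw [if_pos]
          obtain ⟨t, ht⟩ := hpo
          have hev : Even ((p : ℤ) + 1) := ⟨t + 1, by push_cast [ht]; ring⟩
          exact hev.mul_right l
        have hSz' : Sz = ∑ l ∈ Finset.Icc (-(m / p : ℤ)) ((m : ℤ) / p),
            ((2 * m).choose ((m : ℤ) + p * l).toNat : ℤ) := by
          rw [hSz]
          apply Finset.sum_congr rfl
          intro l hl
          rw [hsign l hl, one_mul]
        rcases Nat.eq_zero_or_pos m with rfl | hm
        · have : Sz = 1 := by
            rw [hSz']
            norm_num
          rw [this, h1]
          obtain ⟨t, ht⟩ := hpo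
          exact ⟨t, by push_cast [ht]; ring⟩
        · obtain ⟨s, hs⟩ := even_sum p m (by omega) hm
          refine ⟨(p : ℤ) * s - (ep : ℕ) * (2 * 4 ^ (m - 1)), ?_⟩
          rw [hSz', hs]
          have h4 : (4 : ℤ) ^ m = 2 * (2 * 4 ^ (m - 1)) := by
            rw [show m = (m - 1) + 1 from by omega]
            ring_nf
            simp [pow_succ]
          rw [h4]
          ring
    obtain ⟨z, hz⟩ := hpar
    refine ⟨z, ?_⟩
    have hcast : (p : ℝ) * (Sz : ℝ) - ((ep : ℕ) : ℝ) * 4 ^ m = 2 * (z : ℝ) := by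
      exact_mod_cast congrArg (Int.cast : ℤ → ℝ) hz
    rw [hSrz] at E
    have hE2 : (2 : ℝ) ^ m * L * 2 = (z : ℝ) * 2 := by
      calc (2:ℝ) ^ m * L * 2 = 2 ^ (m + 1) * L := by rw [pow_succ]; ring
        _ = 2 * (z : ℝ) := E.trans hcast
        _ = (z : ℝ) * 2 := by ring
    exact mul_right_cancel₀ two_ne_zero hE2
end

section
/- Evaluating at t = 1: for coprime positive integers p, q, an n-th root of unity ω ≠ 1, and complex numbers α₁,...,αₙ, β₁,...,βₙ with αᵢ^p = βⱼ^q = ω and all αᵢ ≠ 1, βⱼ ≠ 1, the number (ω − 1)ⁿ / (∏ᵢ(αᵢ − 1) ∏ⱼ(βⱼ − 1)) is an algebraic integer, provided that for each common eigenvalue multiplicity pattern, v + w ≤ n as in the irreducibility condition (equivalently, assuming each αᵢ has multiplicity vᵢ and each βⱼ multiplicity wⱼ with vᵢ + wⱼ ≤ n for all i,j). -/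
/-!
Work in the ring of all algebraic integers, which is integrally closed. For a root of unity `x`,
`x - 1` is a unit unless the order of `x` is a prime power. So we may assume that `ω` has order a
power of a prime `ℓ`, which does not divide, say, `q`; write `p = ℓ ^ s * p₀` with `ℓ ∤ p₀`.
Discarding the unit factors, every remaining `β` has `ℓ`-power order, hence is the unique such
`q`-th root of `ω`, and `β - 1 ~ ω - 1`; every remaining `α` satisfies
`(α - 1) ^ ℓ ^ s ~ α ^ ℓ ^ s - 1 ~ ω - 1`, and these `α` are `ℓ ^ s`-th roots of one element, so
they take at most `ℓ ^ s` values. If `w` of the `β` remain, the multiplicity condition leaves room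
for at most `ℓ ^ s * (n - w)` of the `α`, so `(∏ (α - 1)) ^ ℓ ^ s ∣ ((ω - 1) ^ (n - w)) ^ ℓ ^ s`,
and integral closedness lets us take `ℓ ^ s`-th roots.
-/

open Finset Polynomial

theorem coprime_orderOf_of_pow_prime_pow_eq_one {M : Type*} [Monoid M] {ℓ k m : ℕ}
    (hℓ : ℓ.Prime) {x : M} (hx : x ^ ℓ ^ k = 1) (hm : ¬ℓ ∣ m) : m.Coprime (orderOf x) :=
  (Nat.Coprime.pow_right k (Nat.coprime_comm.mp ((hℓ.coprime_iff_not_dvd).mpr hm)))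
    |>.coprime_dvd_right (orderOf_dvd_of_pow_eq_one hx)

theorem eq_of_pow_eq_pow_of_pow_prime_pow_eq_one {M : Type*} [Monoid M] {ℓ k k' m : ℕ}
    (hℓ : ℓ.Prime) {x y : M} (hx : x ^ ℓ ^ k = 1) (hy : y ^ ℓ ^ k' = 1) (hm : ¬ℓ ∣ m)
    (hxy : x ^ m = y ^ m) : x = y := by
  have hxy1 : (x, y) ^ ℓ ^ (k + k') = 1 := by
    ext
    · simp [pow_add, pow_mul, hx]
    · simp [pow_add, pow_mul', hy]
  -- working in `M × M` gives one `u` with `(z ^ m) ^ u = z` for both `z = x` and `z = y`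
  obtain ⟨u, hu⟩ :=
    exists_pow_eq_self_of_coprime (coprime_orderOf_of_pow_prime_pow_eq_one hℓ hxy1 hm)
  have hfst := congrArg Prod.fst hu
  have hsnd := congrArg Prod.snd hu
  simp only [Prod.pow_fst, Prod.pow_snd] at hfst hsnd
  rw [← hfst, ← hsnd, hxy]

section RootsOfUnity

variable {R : Type*} [CommRing R] [IsDomain R]

theorem exists_orderOf_eq_prime_pow_of_not_isUnit_sub_one {x : R} (hx : IsOfFinOrder x)
    (h : ¬IsUnit (x - 1)) : ∃ ℓ k, ℓ.Prime ∧ orderOf x = ℓ ^ k := by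
  by_contra! hne
  have hpos := hx.orderOf_pos
  -- `Φ_m(1) = 1` when `m` is not a prime power, and `1 - x` is one of the factors of `Φ_m(1)`.
  have hprod : ∏ μ ∈ primitiveRoots (orderOf x) R, (1 - μ) = 1 := by
    simpa [cyclotomic_eq_prod_X_sub_primitiveRoots (IsPrimitiveRoot.orderOf x), eval_prod] using
      eval_one_cyclotomic_not_prime_pow (R := R) fun hℓ k => (hne _ k hℓ).symm
  have hmem : x ∈ primitiveRoots (orderOf x) R :=
    (mem_primitiveRoots hpos).mpr (IsPrimitiveRoot.orderOf x)
  have hdvd : 1 - x ∣ 1 := (dvd_prod_of_mem (fun μ => 1 - μ) hmem).trans (dvd_of_eq hprod)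
  exact h (by simpa using (isUnit_of_dvd_one hdvd).neg)

theorem exists_pow_prime_pow_eq_one_of_not_isUnit_sub_one {ℓ c m : ℕ} (hℓ : ℓ.Prime)
    {x ω : R} (hω : ω ^ ℓ ^ c = 1) (hω1 : ω ≠ 1) (hx : x ^ m = ω) (hx1 : ¬IsUnit (x - 1)) :
    ∃ k, x ^ ℓ ^ k = 1 := by
  have hm : m ≠ 0 := by rintro rfl; exact hω1 (hx ▸ pow_zero x)
  have hfin : IsOfFinOrder x := isOfFinOrder_iff_pow_eq_one.mpr
    ⟨m * ℓ ^ c, by have := hℓ.pos; positivity, by rw [pow_mul, hx, hω]⟩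
  obtain ⟨ℓ', k, hℓ', hk⟩ := exists_orderOf_eq_prime_pow_of_not_isUnit_sub_one hfin hx1
  obtain ⟨j, -, hj⟩ := (Nat.dvd_prime_pow hℓ).mp (orderOf_dvd_of_pow_eq_one hω)
  have hj0 : j ≠ 0 := by
    rintro rfl
    exact hω1 (orderOf_eq_one_iff.mp (by simpa using hj))
  have hℓω : ℓ ∣ orderOf ω := hj ▸ dvd_pow_self ℓ hj0
  have hℓx : ℓ ∣ ℓ' ^ k := hk ▸ hℓω.trans (hx ▸ orderOf_pow_dvd m)
  have hℓℓ' : ℓ = ℓ' := (Nat.prime_dvd_prime_iff_eq hℓ hℓ').mp (hℓ.dvd_of_dvd_pow hℓx)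
  exact ⟨k, hℓℓ' ▸ hk ▸ pow_orderOf_eq_one x⟩

theorem associated_pow_sub_one_of_coprime {x : R} {m : ℕ} (h : m.Coprime (orderOf x)) :
    Associated (x ^ m - 1) (x - 1) := by
  obtain ⟨u, hu⟩ := exists_pow_eq_self_of_coprime h
  refine associated_of_dvd_dvd ?_ (sub_one_dvd_pow_sub_one x m)
  simpa [hu] using sub_one_dvd_pow_sub_one (x ^ m) u

theorem associated_pow_prime_pow_sub_one {ℓ k s : ℕ} (hℓ : ℓ.Prime) {x : R}
    (hx : x ^ ℓ ^ k = 1) (hxs : x ^ ℓ ^ s ≠ 1) :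
    Associated (x ^ ℓ ^ s - 1) ((x - 1) ^ ℓ ^ s) := by
  obtain ⟨j, -, hj⟩ := (Nat.dvd_prime_pow hℓ).mp (orderOf_dvd_of_pow_eq_one hx)
  have hsj : s < j := by
    by_contra! h
    exact hxs (orderOf_dvd_iff_pow_eq_one.mp (hj ▸ pow_dvd_pow ℓ h))
  have hζ : IsPrimitiveRoot (x ^ ℓ ^ (j - s)) (ℓ ^ s) := by
    have := (hj ▸ IsPrimitiveRoot.orderOf x).pow_of_dvd (pow_ne_zero _ hℓ.ne_zero)
      (pow_dvd_pow ℓ (Nat.sub_le j s))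
    rwa [Nat.pow_div (Nat.sub_le j s) hℓ.pos, Nat.sub_sub_self hsj.le] at this
  have hspos : 0 < ℓ ^ s := pow_pos hℓ.pos s
  have : NeZero (ℓ ^ s) := ⟨hspos.ne'⟩
  -- each factor `1 - μ x` of `1 - x ^ ℓ ^ s` is `1 - x ^ e` with `ℓ ∤ e`
  have hfactor : ∀ μ ∈ nthRootsFinset (ℓ ^ s) (1 : R), Associated (1 - μ * x) (x - 1) := by
    intro μ hμ
    obtain ⟨i, -, rfl⟩ := hζ.eq_pow_of_pow_eq_one ((mem_nthRootsFinset hspos 1).mp hμ)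
    have hndvd : ¬ℓ ∣ ℓ ^ (j - s) * i + 1 := fun h => hℓ.not_dvd_one
      ((Nat.dvd_add_right (dvd_mul_of_dvd_left (dvd_pow_self ℓ (by omega)) i)).mp h)
    rw [← pow_mul, ← pow_succ, ← neg_sub]
    exact (associated_pow_sub_one_of_coprime
      (coprime_orderOf_of_pow_prime_pow_eq_one hℓ hx hndvd)).neg_left
  have h := Associated.prod _ _ _ hfactor
  have hprod := hζ.pow_sub_pow_eq_prod_sub_mul 1 x hspos
  rw [one_pow] at hprod
  rw [prod_const, hζ.card_nthRootsFinset, ← hprod, ← neg_sub] at h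
  exact Associated.neg_left_iff.mp h

theorem associated_sub_one_pow_of_pow_eq {ℓ k s m : ℕ} (hℓ : ℓ.Prime) {x ω : R}
    (hx : x ^ ℓ ^ k = 1) (hm : ¬ℓ ∣ m) (hxω : x ^ (ℓ ^ s * m) = ω) (hω1 : ω ≠ 1) :
    Associated ((x - 1) ^ ℓ ^ s) (ω - 1) := by
  have hτ : (x ^ ℓ ^ s) ^ ℓ ^ k = 1 := by rw [← pow_mul, mul_comm, pow_mul, hx, one_pow]
  have hτω : (x ^ ℓ ^ s) ^ m = ω := by rw [← pow_mul, hxω]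
  have hτ1 : x ^ ℓ ^ s ≠ 1 := fun h => hω1 (by rw [← hτω, h, one_pow])
  exact (associated_pow_prime_pow_sub_one hℓ hx hτ1).symm.trans
    (hτω ▸ (associated_pow_sub_one_of_coprime
      (coprime_orderOf_of_pow_prime_pow_eq_one hℓ hτ hm)).symm)

theorem exists_card_le_forall_mem_of_pow_eq [DecidableEq R] {ι : Type*} {ℓ s m : ℕ} (hℓ : ℓ.Prime)
    (hm : ¬ℓ ∣ m) {ω : R} {A : Finset ι} {α : ι → R} (htors : ∀ i ∈ A, ∃ k, α i ^ ℓ ^ k = 1)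
    (hα : ∀ i ∈ A, α i ^ (ℓ ^ s * m) = ω) : ∃ T : Finset R, #T ≤ ℓ ^ s ∧ ∀ i ∈ A, α i ∈ T := by
  rcases A.eq_empty_or_nonempty with hA | ⟨i₀, hi₀⟩
  · exact ⟨∅, by simp, by simp [hA]⟩
  -- all `α i ^ ℓ ^ s` coincide, so the `α i` are `ℓ ^ s`-th roots of one element
  refine ⟨(nthRoots (ℓ ^ s) (α i₀ ^ ℓ ^ s)).toFinset,
    (Multiset.toFinset_card_le _).trans (card_nthRoots _ _), fun i hi => ?_⟩
  obtain ⟨k, hk⟩ := htors i hi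
  obtain ⟨k₀, hk₀⟩ := htors i₀ hi₀
  have heq : α i ^ ℓ ^ s = α i₀ ^ ℓ ^ s :=
    eq_of_pow_eq_pow_of_pow_prime_pow_eq_one hℓ (by rw [pow_right_comm, hk, one_pow])
      (by rw [pow_right_comm, hk₀, one_pow]) hm (by rw [← pow_mul, ← pow_mul, hα i hi, hα i₀ hi₀])
  exact Multiset.mem_toFinset.mpr ((mem_nthRoots (pow_pos hℓ.pos s)).mpr heq)

end RootsOfUnity

theorem associated_prod_of_subset_of_isUnit {ι M : Type*} [CommMonoid M] [DecidableEq ι]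
    {s t : Finset ι} {f : ι → M} (hts : t ⊆ s) (hunit : ∀ i ∈ s \ t, IsUnit (f i)) :
    Associated (∏ i ∈ t, f i) (∏ i ∈ s, f i) := by
  rw [← prod_sdiff hts]
  exact associated_unit_mul_right _ _ (IsUnit.prod_iff.mpr hunit)

theorem card_le_card_mul_sub_card {V W : Type*} [DecidableEq V] [DecidableEq W] {n : ℕ}
    {α : Fin n → V} {β : Fin n → W}
    (hmult : ∀ i j, #{i' | α i' = α i} + #{j' | β j' = β j} ≤ n)
    {A B : Finset (Fin n)} {T : Finset V} (hAT : ∀ i ∈ A, α i ∈ T)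
    (hB : ∀ j ∈ B, ∀ j' ∈ B, β j = β j') : #A ≤ #T * (n - #B) := by
  have hfiber : ∀ i, #{i' | α i' = α i} ≤ n - #B := by
    intro i
    rcases B.eq_empty_or_nonempty with rfl | ⟨j, hj⟩
    · simpa using card_filter_le univ fun i' => α i' = α i
    · have hBj : #B ≤ #{j' | β j' = β j} :=
        card_le_card fun j' hj' => mem_filter.mpr ⟨mem_univ j', hB j' hj' j hj⟩
      have := hmult i j
      omega
  calc #A ≤ (n - #B) * #(A.image α) := card_le_mul_card_image A _ fun v hv => by
          obtain ⟨i, -, rfl⟩ := mem_image.mp hv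
          exact (card_le_card (filter_subset_filter _ (subset_univ A))).trans (hfiber i)
    _ ≤ (n - #B) * #T := Nat.mul_le_mul_left _ (card_le_card (image_subset_iff.mpr hAT))
    _ = #T * (n - #B) := mul_comm _ _

section Divisibility

variable {R : Type*} [CommRing R] [IsDomain R] [IsIntegrallyClosed R]

theorem prod_dvd_pow_of_associated_pow {ι : Type*} {A : Finset ι} {x : ι → R} {y : R}
    {N e : ℕ} (hN : N ≠ 0) (hx : ∀ i ∈ A, Associated (x i ^ N) y) (hA : #A ≤ N * e) :
    ∏ i ∈ A, x i ∣ y ^ e := by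
  rw [← IsIntegrallyClosed.pow_dvd_pow_iff hN, ← prod_pow]
  calc ∏ i ∈ A, x i ^ N ∣ y ^ #A := by simpa using (Associated.prod A _ _ hx).dvd
    _ ∣ (y ^ e) ^ N := by
      rw [← pow_mul, mul_comm]
      exact pow_dvd_pow _ hA

theorem prod_sub_one_mul_prod_sub_one_dvd_of_not_dvd [DecidableEq R] {ℓ c p q n : ℕ} (hℓ : ℓ.Prime)
    (hp : p ≠ 0) (hq : ¬ℓ ∣ q) {ω : R} (hω : ω ^ ℓ ^ c = 1) (hω1 : ω ≠ 1)
    (α β : Fin n → R) (hα : ∀ i, α i ^ p = ω) (hβ : ∀ j, β j ^ q = ω)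
    (hmult : ∀ i j, #{i' | α i' = α i} + #{j' | β j' = β j} ≤ n) :
    (∏ i, (α i - 1)) * ∏ j, (β j - 1) ∣ (ω - 1) ^ n := by
  classical
  obtain ⟨s, p₀, hp₀, rfl⟩ := Nat.exists_eq_pow_mul_and_not_dvd hp ℓ hℓ.ne_one
  set A : Finset (Fin n) := {i | ¬IsUnit (α i - 1)}
  set B : Finset (Fin n) := {j | ¬IsUnit (β j - 1)}
  have hαtors : ∀ i ∈ A, ∃ k, α i ^ ℓ ^ k = 1 := fun i hi =>
    exists_pow_prime_pow_eq_one_of_not_isUnit_sub_one hℓ hω hω1 (hα i) (mem_filter.mp hi).2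
  have hβtors : ∀ j ∈ B, ∃ k, β j ^ ℓ ^ k = 1 := fun j hj =>
    exists_pow_prime_pow_eq_one_of_not_isUnit_sub_one hℓ hω hω1 (hβ j) (mem_filter.mp hj).2
  have hBassoc : ∀ j ∈ B, Associated ((β j - 1) ^ ℓ ^ 0) (ω - 1) := fun j hj => by
    obtain ⟨k, hk⟩ := hβtors j hj
    exact associated_sub_one_pow_of_pow_eq hℓ hk hq (by simpa using hβ j) hω1
  have hAassoc : ∀ i ∈ A, Associated ((α i - 1) ^ ℓ ^ s) (ω - 1) := fun i hi => by
    obtain ⟨k, hk⟩ := hαtors i hi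
    exact associated_sub_one_pow_of_pow_eq hℓ hk hp₀ (hα i) hω1
  have hBeq : ∀ j ∈ B, ∀ j' ∈ B, β j = β j' := fun j hj j' hj' => by
    obtain ⟨k, hk⟩ := hβtors j hj
    obtain ⟨k', hk'⟩ := hβtors j' hj'
    exact eq_of_pow_eq_pow_of_pow_prime_pow_eq_one hℓ hk hk' hq (by rw [hβ, hβ])
  obtain ⟨T, hT, hAT⟩ := exists_card_le_forall_mem_of_pow_eq hℓ hp₀ hαtors fun i _ => hα i
  have hcard : #A ≤ ℓ ^ s * (n - #B) :=
    (card_le_card_mul_sub_card hmult hAT hBeq).trans (Nat.mul_le_mul_right _ hT)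
  have hunits : Associated ((∏ i ∈ A, (α i - 1)) * ∏ j ∈ B, (β j - 1))
      ((∏ i, (α i - 1)) * ∏ j, (β j - 1)) :=
    (associated_prod_of_subset_of_isUnit (subset_univ A) fun i hi => by simpa [A] using hi).mul_mul
      (associated_prod_of_subset_of_isUnit (subset_univ B) fun j hj => by simpa [B] using hj)
  calc _ ∣ _ := hunits.symm.dvd
    _ ∣ (ω - 1) ^ (n - #B) * (ω - 1) ^ #B :=
      mul_dvd_mul (prod_dvd_pow_of_associated_pow (pow_ne_zero _ hℓ.ne_zero) hAassoc hcard)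
        (prod_dvd_pow_of_associated_pow (pow_ne_zero _ hℓ.ne_zero) hBassoc (by simp))
    _ = (ω - 1) ^ n := by rw [← pow_add, Nat.sub_add_cancel (card_le_univ B |>.trans (by simp))]

theorem prod_sub_one_mul_prod_sub_one_dvd [DecidableEq R] {p q n : ℕ} (hp : 0 < p) (hq : 0 < q)
    (hpq : p.Coprime q) (hn : 1 ≤ n) {ω : R} (hω : ω ^ n = 1) (hω1 : ω ≠ 1)
    (α β : Fin n → R) (hα : ∀ i, α i ^ p = ω) (hβ : ∀ j, β j ^ q = ω)
    (hmult : ∀ i j, #{i' | α i' = α i} + #{j' | β j' = β j} ≤ n) :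
    (∏ i, (α i - 1)) * ∏ j, (β j - 1) ∣ (ω - 1) ^ n := by
  by_cases hunit : IsUnit (ω - 1)
  · refine (IsUnit.mul ?_ ?_).dvd
    · exact IsUnit.prod_univ_iff.mpr fun i =>
        isUnit_of_dvd_unit (hα i ▸ sub_one_dvd_pow_sub_one (α i) p) hunit
    · exact IsUnit.prod_univ_iff.mpr fun j =>
        isUnit_of_dvd_unit (hβ j ▸ sub_one_dvd_pow_sub_one (β j) q) hunit
  obtain ⟨ℓ, c, hℓ, hc⟩ := exists_orderOf_eq_prime_pow_of_not_isUnit_sub_one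
    (isOfFinOrder_iff_pow_eq_one.mpr ⟨n, hn, hω⟩) hunit
  have hωc : ω ^ ℓ ^ c = 1 := hc ▸ pow_orderOf_eq_one ω
  have hpq' : ¬ℓ ∣ p ∨ ¬ℓ ∣ q := by
    by_contra! h
    exact hℓ.not_dvd_one (hpq ▸ Nat.dvd_gcd h.1 h.2)
  rcases hpq' with hpℓ | hqℓ
  · rw [mul_comm]
    exact prod_sub_one_mul_prod_sub_one_dvd_of_not_dvd hℓ hq.ne' hpℓ hωc hω1 β α hβ hα
      fun j i => (add_comm _ _).trans_le (hmult i j)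
  · exact prod_sub_one_mul_prod_sub_one_dvd_of_not_dvd hℓ hp.ne' hqℓ hωc hω1 α β hα hβ hmult

end Divisibility

theorem stmt17 (p q n : ℕ) (hp : 0 < p) (hq : 0 < q) (hpq : Nat.Coprime p q)
    (hn : 1 ≤ n) (ω : ℂ) (hω : ω ^ n = 1) (hω1 : ω ≠ 1)
    (α β : Fin n → ℂ) (hα : ∀ i, α i ^ p = ω) (hβ : ∀ j, β j ^ q = ω)
    (hα1 : ∀ i, α i ≠ 1) (hβ1 : ∀ j, β j ≠ 1)
    (hmult : ∀ i j,
      (Finset.univ.filter fun i' => α i' = α i).card +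
        (Finset.univ.filter fun j' => β j' = β j).card ≤ n) :
    IsIntegral ℤ
      ((ω - 1) ^ n / ((∏ i, (α i - 1)) * ∏ j, (β j - 1))) := by
  have : IsIntegrallyClosed (integralClosure ℤ ℂ) := .of_isIntegrallyClosedIn _ ℂ
  have hωint : IsIntegral ℤ ω := ⟨X ^ n - 1, monic_X_pow_sub_C 1 (by omega), by simp [hω]⟩
  have hαint : ∀ i, IsIntegral ℤ (α i) := fun i => IsIntegral.of_pow hp (hα i ▸ hωint)
  have hβint : ∀ j, IsIntegral ℤ (β j) := fun j => IsIntegral.of_pow hq (hβ j ▸ hωint)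
  obtain ⟨t, ht⟩ := prod_sub_one_mul_prod_sub_one_dvd (R := integralClosure ℤ ℂ) hp hq hpq hn
    (ω := ⟨ω, hωint⟩) (Subtype.ext hω) (fun h => hω1 (congrArg Subtype.val h))
    (fun i => ⟨α i, hαint i⟩) (fun j => ⟨β j, hβint j⟩) (fun i => Subtype.ext (hα i))
    (fun j => Subtype.ext (hβ j)) (by simpa [Subtype.ext_iff] using hmult)
  have hden : (∏ i, (α i - 1)) * ∏ j, (β j - 1) ≠ 0 :=
    mul_ne_zero (prod_ne_zero_iff.mpr fun i _ => sub_ne_zero.mpr (hα1 i))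
      (prod_ne_zero_iff.mpr fun j _ => sub_ne_zero.mpr (hβ1 j))
  have ht' := congrArg Subtype.val ht
  push_cast at ht'
  rw [ht', mul_div_cancel_left₀ _ hden]
  exact t.2
end
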